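/- arXiv:1104.1266 — 3 statements merged into one kernel-verified Lean document; each statement's English description precedes it below -/
import Mathlib

section
/- For every n ≥ 2 and θ > 0, the push-forward of the Ewens measure P^(n)_θ on S_n under the canonical projection p_{n−1,n} : S_n → S_{n−1} equals the Ewens measure P^(n−1)_θ on S_{n−1}; i.e., for every t ∈ S_{n−1}, ∑_{s ∈ S_n : p_{n−1,n}(s) = t} θ^{ℓ(s)}/(θ)_n = θ^{ℓ(t)}/(θ)_{n−1}, where (θ)_k = θ(θ+1)⋯(θ+k−1). -/
/-- Number of cycles of a permutation, counting fixed points as cycles. -/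
def numCycles {n : ℕ} (s : Equiv.Perm (Fin n)) : ℕ :=
  s.cycleType.card + (n - s.cycleType.sum)

/-- The canonical projection `S_{n+1} → S_n`: delete the last point from its cycle. -/
def canonicalProjFun {n : ℕ} (s : Equiv.Perm (Fin (n + 1))) : Fin n → Fin n :=
  fun i =>
    if h : s i.castSucc = Fin.last n then
      (s (Fin.last n)).castPred (by
        intro he
        have : (i.castSucc : Fin (n + 1)) = Fin.last n := s.injective (h.trans he.symm)
        exact (Fin.castSucc_lt_last i).ne this)
    else
      (s i.castSucc).castPred h

/-!
Every `s` over `t` is `(a n) * t'`, where `t'` is `t` with `n` added as a fixed point and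
`a = s n`: the point `n` is inserted into the cycle of `t` just before `a`, or kept fixed if
`a = n`. Composing with a transposition `(x s(x))` splits `x` off its cycle, so `s` has as many
cycles as `t` in the `n` cases `a ≠ n` and one more when `a = n`. The fiber sum is therefore
`(n θ^ℓ + θ^(ℓ+1)) / (θ)_{n+1} = θ^ℓ (θ + n) / (θ)_{n+1} = θ^ℓ / (θ)_n`, with `ℓ = ℓ(t)`.
-/

open Equiv Finset

namespace Equiv.Perm

variable {α : Type*} [Fintype α] [DecidableEq α]

/-- `card α` minus the number of cycles of `σ`, fixed points included. -/
def cycleExcess (σ : Perm α) : ℕ :=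
  (σ.cycleType.map (· - 1)).sum

theorem cycleExcess_add_card_cycleType (σ : Perm α) :
    σ.cycleExcess + Multiset.card σ.cycleType = #σ.support := by
  have hpos : ∀ k ∈ σ.cycleType, k - 1 + 1 = k := fun k hk =>
    Nat.sub_add_cancel (one_le_two.trans (two_le_of_mem_cycleType hk))
  calc σ.cycleExcess + Multiset.card σ.cycleType
      = (σ.cycleType.map (fun k => k - 1 + 1)).sum := by
        simp [cycleExcess, Multiset.sum_map_add]
    _ = #σ.support := by rw [Multiset.map_congr rfl hpos, Multiset.map_id', sum_cycleType]

@[simp]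
theorem cycleExcess_one : (1 : Perm α).cycleExcess = 0 := by
  simp [cycleExcess]

theorem Disjoint.cycleExcess_mul {σ τ : Perm α} (h : Disjoint σ τ) :
    (σ * τ).cycleExcess = σ.cycleExcess + τ.cycleExcess := by
  simp [cycleExcess, h.cycleType_mul]

theorem IsCycle.cycleExcess {σ : Perm α} (h : σ.IsCycle) : σ.cycleExcess = #σ.support - 1 := by
  simp [Perm.cycleExcess, h.cycleType]

theorem IsCycle.cycleExcess_swap_mul {c : Perm α} (hc : c.IsCycle) {x : α} (hx : c x ≠ x) :
    (swap x (c x) * c).cycleExcess + 1 = c.cycleExcess := by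
  by_cases hcc : c (c x) = x
  · have hswap := hc.eq_swap_of_apply_apply_eq_self hx hcc
    generalize c x = y at hx hswap ⊢
    subst hswap
    rw [swap_mul_self, cycleExcess_one, hc.cycleExcess, card_support_swap hx.symm]
  · have hx' : x ∈ c.support := mem_support.2 hx
    rw [(hc.swap_mul hx hcc).cycleExcess, hc.cycleExcess, support_swap_mul_eq c x hcc,
      card_sdiff_of_subset (singleton_subset_iff.2 hx'), card_singleton]
    have := hc.two_le_card_support
    omega

theorem cycleExcess_swap_mul {f : Perm α} {x : α} (hx : f x ≠ x) :
    (swap x (f x) * f).cycleExcess + 1 = f.cycleExcess := by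
  set c := f.cycleOf x
  set d := f * c⁻¹
  have hcd : Disjoint c d :=
    (disjoint_mul_inv_of_mem_cycleFactorsFinset
      (cycleOf_mem_cycleFactorsFinset_iff.2 (mem_support.2 hx))).symm
  have hf : f = c * d := by rw [hcd.commute.eq]; exact (inv_mul_cancel_right f c).symm
  have hcx : c x = f x := cycleOf_apply_self f x
  have hc : c.IsCycle := isCycle_cycleOf f hx
  clear_value c d
  have hd : Disjoint (swap x (c x) * c) d :=
    hcd.mono (fun y hy => (mem_support_swap_mul_imp_mem_support_ne hy).1) le_rfl
  calc (swap x (f x) * f).cycleExcess + 1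
      = (swap x (c x) * c).cycleExcess + 1 + d.cycleExcess := by
        rw [← hcx, hf, ← mul_assoc, hd.cycleExcess_mul]; ring
    _ = f.cycleExcess := by
        rw [hc.cycleExcess_swap_mul (hcx ▸ hx), hf, hcd.cycleExcess_mul]

end Equiv.Perm

open Equiv.Perm

theorem numCycles_add_cycleExcess {n : ℕ} (s : Perm (Fin n)) : numCycles s + s.cycleExcess = n := by
  have hexcess := s.cycleExcess_add_card_cycleType
  have hsupp : #s.support ≤ n := by simpa using s.support.card_le_univ
  rw [numCycles, sum_cycleType]
  omega

theorem numCycles_swap_mul {n : ℕ} {s : Perm (Fin n)} {x : Fin n} (hx : s x ≠ x) :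
    numCycles (swap x (s x) * s) = numCycles s + 1 := by
  have := cycleExcess_swap_mul hx
  have := numCycles_add_cycleExcess s
  have := numCycles_add_cycleExcess (swap x (s x) * s)
  omega

section Insertion

variable {n : ℕ}

def extendLast (t : Perm (Fin n)) : Perm (Fin (n + 1)) :=
  t.extendDomain (finSuccAboveEquiv (Fin.last n))

@[simp]
theorem extendLast_castSucc (t : Perm (Fin n)) (i : Fin n) :
    extendLast t i.castSucc = (t i).castSucc := by
  simpa [extendLast, finSuccAboveEquiv_apply] using
    extendDomain_apply_image t (finSuccAboveEquiv (Fin.last n)) i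

@[simp]
theorem extendLast_last (t : Perm (Fin n)) : extendLast t (Fin.last n) = Fin.last n :=
  extendDomain_apply_not_subtype _ _ (not_not.2 rfl)

theorem numCycles_extendLast (t : Perm (Fin n)) : numCycles (extendLast t) = numCycles t + 1 := by
  have hexcess : (extendLast t).cycleExcess = t.cycleExcess := by
    simp only [extendLast, cycleExcess, cycleType_extendDomain]
  have := numCycles_add_cycleExcess t
  have := numCycles_add_cycleExcess (extendLast t)
  omega

theorem swap_mul_apply_castSucc (s : Perm (Fin (n + 1))) (i : Fin n) :
    (swap (Fin.last n) (s (Fin.last n)) * s) i.castSucc = (canonicalProjFun s i).castSucc := by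
  rw [mul_apply, canonicalProjFun]
  split_ifs with h
  · rw [h, swap_apply_left, Fin.castSucc_castPred]
  · have hne : s i.castSucc ≠ s (Fin.last n) := s.injective.ne (Fin.castSucc_lt_last i).ne
    rw [swap_apply_of_ne_of_ne h hne, Fin.castSucc_castPred]

theorem canonicalProjFun_eq_iff (s : Perm (Fin (n + 1))) (t : Perm (Fin n)) :
    canonicalProjFun s = ⇑t ↔ swap (Fin.last n) (s (Fin.last n)) * s = extendLast t := by
  constructor
  · intro h
    ext j : 1
    induction j using Fin.lastCases with
    | last => simp
    | cast i => rw [swap_mul_apply_castSucc, h, extendLast_castSucc]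
  · intro h
    funext i
    apply Fin.castSucc_injective
    rw [← swap_mul_apply_castSucc, h, extendLast_castSucc]

/-- Insert the last point into the cycle of `t` just before `a` (as a fixed point if `a` is the
last point). -/
def insertLast (t : Perm (Fin n)) (a : Fin (n + 1)) : Perm (Fin (n + 1)) :=
  swap (Fin.last n) a * extendLast t

variable (t : Perm (Fin n))

@[simp]
theorem insertLast_apply_last (a : Fin (n + 1)) : insertLast t a (Fin.last n) = a := by
  simp [insertLast]

theorem insertLast_injective : Function.Injective (insertLast t) := fun a b h => by
  simpa using congrArg (fun s : Perm (Fin (n + 1)) => s (Fin.last n)) h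

theorem filter_canonicalProjFun_eq :
    univ.filter (fun s : Perm (Fin (n + 1)) => canonicalProjFun s = ⇑t)
      = univ.image (insertLast t) := by
  ext s
  simp only [mem_filter, mem_univ, true_and, mem_image, canonicalProjFun_eq_iff, insertLast]
  constructor
  · intro h
    exact ⟨s (Fin.last n), by rw [← h, swap_mul_self_mul]⟩
  · rintro ⟨a, rfl⟩
    simp [swap_mul_self_mul]

theorem numCycles_insertLast_last : numCycles (insertLast t (Fin.last n)) = numCycles t + 1 := by
  rw [insertLast, swap_self, ← Perm.one_def, one_mul, numCycles_extendLast]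

theorem numCycles_insertLast_castSucc (b : Fin n) :
    numCycles (insertLast t b.castSucc) = numCycles t := by
  have hne : insertLast t b.castSucc (Fin.last n) ≠ Fin.last n := by
    rw [insertLast_apply_last]; exact (Fin.castSucc_lt_last b).ne
  have h := numCycles_swap_mul hne
  rw [insertLast_apply_last, insertLast, swap_mul_self_mul, numCycles_extendLast] at h
  rw [insertLast]
  omega

theorem sum_filter_canonicalProjFun_eq {M : Type*} [AddCommMonoid M] (f : ℕ → M) :
    ∑ s ∈ univ.filter (fun s : Perm (Fin (n + 1)) => canonicalProjFun s = ⇑t), f (numCycles s)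
      = n • f (numCycles t) + f (numCycles t + 1) := by
  rw [filter_canonicalProjFun_eq, sum_image (insertLast_injective t).injOn, Fin.sum_univ_castSucc]
  simp [numCycles_insertLast_castSucc, numCycles_insertLast_last]

end Insertion

theorem ewens_pushforward_canonicalProj_general (n : ℕ) (θ : ℝ) (hθ : 0 < θ)
    (t : Equiv.Perm (Fin n)) :
    ∑ s ∈ Finset.univ.filter (fun s : Equiv.Perm (Fin (n + 1)) => canonicalProjFun s = ⇑t),
        θ ^ numCycles s / ∏ i ∈ Finset.range (n + 1), (θ + i)
      = θ ^ numCycles t / ∏ i ∈ Finset.range n, (θ + i) := by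
  have hθn : θ + n ≠ 0 := by positivity
  rw [sum_filter_canonicalProjFun_eq t (fun k => θ ^ k / ∏ i ∈ range (n + 1), (θ + i)),
    prod_range_succ, nsmul_eq_mul, ← mul_div_assoc, ← add_div,
    show (n : ℝ) * θ ^ numCycles t + θ ^ (numCycles t + 1) = θ ^ numCycles t * (θ + n) by ring,
    mul_div_mul_right _ _ hθn]

/-- The push-forward of the Ewens measure on `S_{n+1}` under the canonical
projection is the Ewens measure on `S_n`. -/
theorem ewens_pushforward_canonicalProj (n : ℕ) (hn : 1 ≤ n) (θ : ℝ) (hθ : 0 < θ)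
    (t : Equiv.Perm (Fin n)) :
    ∑ s ∈ Finset.univ.filter (fun s : Equiv.Perm (Fin (n + 1)) => canonicalProjFun s = ⇑t),
        θ ^ numCycles s / ∏ i ∈ Finset.range (n + 1), (θ + i)
      = θ ^ numCycles t / ∏ i ∈ Finset.range n, (θ + i) :=
  ewens_pushforward_canonicalProj_general n θ hθ t
end

section
/- The Ewens sampling formula defines a probability measure on partitions of n: for every θ > 0 and n ≥ 1, ∑_{ρ ⊢ n} θ^{ℓ(ρ)} / ((θ)_n) · ∏_k 1/(k^{m_k} m_k!) · n! = 1, where ℓ(ρ) is the number of parts of ρ, m_k the multiplicity of k in ρ, and (θ)_n = θ(θ+1)⋯(θ+n−1). -/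
/-!
Write `w(ρ) = θ ^ ℓ(ρ) / z_ρ` and `W_m = ∑_{ρ ⊢ m} w(ρ)`. Adding a part `k` to `ρ` multiplies
`w` by `θ / (k * m_k)`, with `m_k` counted after the addition, and `∑_k k * m_k = m`; so summing
over partitions with a distinguished part gives `m * W_m = θ * ∑_{j < m} W_j`. Subtracting two
consecutive instances yields `(m + 1) * W_{m+1} = (θ + m) * W_m`, hence `W_m = (θ)_m / m!`.
-/

open Finset Nat

namespace Multiset

/-- For a partition `s`, the order of the centralizer of a permutation of cycle type `s`. -/
noncomputable def zCoeff (s : Multiset ℕ) : ℝ :=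
  ∏ k ∈ s.toFinset, (k : ℝ) ^ s.count k * (s.count k)!

theorem zCoeff_eq_prod_of_subset {s : Multiset ℕ} {t : Finset ℕ} (h : s.toFinset ⊆ t) :
    s.zCoeff = ∏ k ∈ t, (k : ℝ) ^ s.count k * (s.count k)! :=
  prod_subset h fun k _ hk => by simp [count_eq_zero.mpr (by simpa using hk)]

theorem zCoeff_cons (k : ℕ) (s : Multiset ℕ) :
    (k ::ₘ s).zCoeff = s.zCoeff * (k * (s.count k + 1)) := by
  have hk : k ∈ insert k s.toFinset := mem_insert_self k _
  rw [zCoeff_eq_prod_of_subset (t := insert k s.toFinset) (by simp),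
    zCoeff_eq_prod_of_subset (subset_insert k _), ← mul_prod_erase _ _ hk,
    ← mul_prod_erase _ _ hk, count_cons_self]
  have hrest : ∀ j ∈ (insert k s.toFinset).erase k,
      (j : ℝ) ^ (k ::ₘ s).count j * ((k ::ₘ s).count j)! = (j : ℝ) ^ s.count j * (s.count j)! :=
    fun j hj => by rw [count_cons_of_ne (ne_of_mem_erase hj)]
  rw [prod_congr rfl hrest, factorial_succ]
  push_cast
  ring

end Multiset

theorem Nat.Partition.sum_range_succ_mul_count {m : ℕ} (ρ : m.Partition) :
    ∑ k ∈ range m, (k + 1) * ρ.parts.count (k + 1) = m := by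
  have h := sum_multiset_count_of_subset ρ.parts (range (m + 1)) fun k hk =>
    mem_range_succ_iff.mpr (le_of_mem_parts (Multiset.mem_toFinset.mp hk))
  rw [ρ.parts_sum, sum_range_succ'] at h
  simpa [mul_comm] using h.symm

section Ewens

variable (θ : ℝ)

noncomputable def ewensWeight (s : Multiset ℕ) : ℝ :=
  θ ^ Multiset.card s / s.zCoeff

theorem ewensWeight_cons {k : ℕ} (hk : k ≠ 0) (s : Multiset ℕ) :
    k * (s.count k + 1) * ewensWeight θ (k ::ₘ s) = θ * ewensWeight θ s := by
  rw [ewensWeight, ewensWeight, Multiset.zCoeff_cons, Multiset.card_cons, pow_succ, mul_comm θ]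
  field_simp

noncomputable def ewensMass (m : ℕ) : ℝ :=
  ∑ ρ : m.Partition, ewensWeight θ ρ.parts

theorem sum_mul_count_mul_ewensWeight {m k : ℕ} (hk : 1 ≤ k) (hkm : k ≤ m) :
    ∑ ρ : m.Partition, k * ρ.parts.count k * ewensWeight θ ρ.parts = θ * ewensMass θ (m - k) := by
  rw [← sum_filter_of_ne (p := fun ρ : m.Partition => k ∈ ρ.parts)
      fun ρ _ hρ => by by_contra h; simp [Multiset.count_eq_zero.mpr h] at hρ,
    sum_subtype _ (p := fun ρ : m.Partition => k ∈ ρ.parts) fun ρ => by simp, ewensMass, mul_sum,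
    ← (Nat.Partition.partitionWithPartEquiv hk hkm).symm.sum_comp]
  refine sum_congr rfl fun q _ => ?_
  rw [Nat.Partition.partitionWithPartEquiv_symm_apply_parts, Multiset.count_cons_self,
    ← ewensWeight_cons θ (k := k) (by omega)]
  push_cast
  rfl

theorem mul_ewensMass (m : ℕ) :
    m * ewensMass θ m = θ * ∑ j ∈ range m, ewensMass θ j := by
  calc (m : ℝ) * ewensMass θ m
      = ∑ ρ : m.Partition, ∑ k ∈ range m,
          ((k + 1 : ℕ) : ℝ) * ρ.parts.count (k + 1) * ewensWeight θ ρ.parts := by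
        simp_rw [ewensMass, mul_sum, ← sum_mul]
        refine sum_congr rfl fun ρ _ => ?_
        congr 1
        exact_mod_cast ρ.sum_range_succ_mul_count.symm
    _ = ∑ k ∈ range m, θ * ewensMass θ (m - 1 - k) := by
        rw [sum_comm]
        refine sum_congr rfl fun k hk => ?_
        rw [sum_mul_count_mul_ewensWeight θ (by omega) (by simpa using hk), Nat.sub_sub, add_comm 1]
    _ = θ * ∑ j ∈ range m, ewensMass θ j := by
        rw [← mul_sum, sum_range_reflect (ewensMass θ)]

theorem succ_mul_ewensMass_succ (m : ℕ) :
    (m + 1) * ewensMass θ (m + 1) = (θ + m) * ewensMass θ m := by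
  have h := mul_ewensMass θ (m + 1)
  rw [sum_range_succ, mul_add, ← mul_ewensMass] at h
  push_cast at h
  linarith

theorem ewensMass_eq (m : ℕ) :
    ewensMass θ m = (∏ i ∈ range m, (θ + i)) / m ! := by
  induction m with
  | zero => simp [ewensMass, ewensWeight, Multiset.zCoeff]
  | succ m ih =>
    have h := succ_mul_ewensMass_succ θ m
    rw [ih] at h
    field_simp at h
    rw [prod_range_succ, factorial_succ, eq_div_iff (by positivity)]
    push_cast
    linear_combination h

end Ewens

theorem ewens_sampling_formula_sums_to_one_general (n : ℕ) (θ : ℝ) (hθ : 0 < θ) :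
    ∑ ρ : Nat.Partition n,
        θ ^ (Multiset.card ρ.parts) / (∏ i ∈ Finset.range n, (θ + i))
          * (∏ k ∈ Finset.Icc 1 n,
              (1 : ℝ) / ((k : ℝ) ^ (ρ.parts.count k) * (ρ.parts.count k).factorial))
          * n.factorial
      = 1 := by
  have hpoch : ∏ i ∈ range n, (θ + i) ≠ 0 := (prod_pos fun i _ => by positivity).ne'
  have hterm (ρ : n.Partition) :
      θ ^ Multiset.card ρ.parts / (∏ i ∈ range n, (θ + i))
          * (∏ k ∈ Icc 1 n, (1 : ℝ) / ((k : ℝ) ^ ρ.parts.count k * (ρ.parts.count k)!)) * n !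
        = ewensWeight θ ρ.parts * (n ! / ∏ i ∈ range n, (θ + i)) := by
    have hsub : ρ.parts.toFinset ⊆ Icc 1 n := fun k hk =>
      mem_Icc.mpr ⟨ρ.parts_pos (Multiset.mem_toFinset.mp hk),
        ρ.le_of_mem_parts (Multiset.mem_toFinset.mp hk)⟩
    rw [prod_div_distrib, prod_const_one, ← Multiset.zCoeff_eq_prod_of_subset hsub, ewensWeight]
    ring
  rw [sum_congr rfl fun ρ _ => hterm ρ, ← sum_mul, ← ewensMass, ewensMass_eq]
  field_simp

/-- The Ewens sampling formula defines a probability measure on the set of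
partitions of `n`. -/
theorem ewens_sampling_formula_sums_to_one (n : ℕ) (hn : 1 ≤ n) (θ : ℝ) (hθ : 0 < θ) :
    ∑ ρ : Nat.Partition n,
        θ ^ (Multiset.card ρ.parts) / (∏ i ∈ Finset.range n, (θ + i))
          * (∏ k ∈ Finset.Icc 1 n,
              (1 : ℝ) / ((k : ℝ) ^ (ρ.parts.count k) * (ρ.parts.count k).factorial))
          * n.factorial
      = 1 :=
  ewens_sampling_formula_sums_to_one_general n θ hθ
end

section
/- The identity ∑_{λ ⊢ n} (z)_λ (z′)_λ (dim λ)² = (zz′)_n · n! holds for all complex z, z′ and all n ≥ 1, where (x)_λ = ∏_{(i,j)∈λ} (x + j − i) is the product over boxes of λ of the shifted contents, (x)_n = x(x+1)⋯(x+n−1), and dim λ is the number of standard Young tableaux of shape λ. -/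
/-- The `i`-th largest part of a partition (0-indexed), with value 0 beyond
the number of parts. -/
def partFun {n : ℕ} (ρ : Nat.Partition n) : ℕ → ℕ :=
  fun i => (ρ.parts.sort (· ≥ ·)).getD i 0

/-- The set of cells (boxes) of the Young diagram of a partition of `n`,
with 0-indexed coordinates `(i, j)`: row `i`, column `j < λ_i`. -/
def cellsOf {n : ℕ} (ρ : Nat.Partition n) : Finset (ℕ × ℕ) :=
  (Finset.range n ×ˢ Finset.range n).filter (fun c => c.2 < partFun ρ c.1)

/-- The number of standard Young tableaux on a given finite set of cells:
bijective fillings by `0, …, |c|−1` that strictly increase along rows and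
down columns (equivalently, strictly increase with the componentwise order). -/
def dimCells (c : Finset (ℕ × ℕ)) : ℕ :=
  Finset.card (Finset.univ.filter (fun T : c → Fin c.card =>
    Function.Bijective T ∧ ∀ a b : c, (a : ℕ × ℕ).1 ≤ (b : ℕ × ℕ).1 →
      (a : ℕ × ℕ).2 ≤ (b : ℕ × ℕ).2 → a ≠ b → T a < T b))

/-- `dim λ`: the number of standard Young tableaux of shape `λ`. -/
def dimP {n : ℕ} (ρ : Nat.Partition n) : ℕ := dimCells (cellsOf ρ)


/-- The generalized Pochhammer symbol `(x)_λ = ∏_{(i,j)∈λ} (x + j − i)`,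
product over the boxes of the Young diagram of `λ` (contents are the same in
0-indexed coordinates). -/
def pochPartition {n : ℕ} (x : ℂ) (ρ : Nat.Partition n) : ℂ :=
  ∏ c ∈ cellsOf ρ, (x + (c.2 : ℂ) - (c.1 : ℂ))

/-!
Write `w(S) = (z)_S (z')_S (dim S)²` for a Young diagram `S`, and `c(x)` for the content of a
cell `x`. Branching `dim S` over the removable corners of `S` turns `∑_{|S| = n+1} w(S)` into a
sum over pairs `(T, x)` with `|T| = n` and `x` addable to `T`, so the recursion
`∑_{|S| = n+1} w(S) = (n + 1)(zz' + n) ∑_{|T| = n} w(T)` follows from the transition identity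
`∑_{x addable} (z + c(x))(z' + c(x)) dim(T ∪ x) = (|T| + 1)(zz' + |T|) dim T`.
That identity is proved by induction on `T`: branching `dim(T ∪ x)` once more and exchanging the
resulting double sum over addable and removable corners reduces it to
`∑_{x addable} (z + c(x))(z' + c(x)) - ∑_{x removable} (z + c(x))(z' + c(x)) = zz' + 2|T|`,
a row-by-row telescoping of the constant second difference of a quadratic.
-/

open Finset

def content (c : ℕ × ℕ) : ℤ := c.2 - c.1

section Corners

variable {S : Finset (ℕ × ℕ)} {a c r : ℕ × ℕ}

def removableCells (S : Finset (ℕ × ℕ)) : Finset (ℕ × ℕ) :=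
  S.filter fun r => ∀ b ∈ S, r ≤ b → b = r

-- Every addable cell lies in `[0, #S]²` (`le_card_of_forall_lt_mem`).
open Classical in
noncomputable def addableCells (S : Finset (ℕ × ℕ)) : Finset (ℕ × ℕ) :=
  (range (#S + 1) ×ˢ range (#S + 1)).filter
    fun c => c ∉ S ∧ IsLowerSet (↑(insert c S) : Set (ℕ × ℕ))

@[simp]
lemma mem_removableCells : r ∈ removableCells S ↔ r ∈ S ∧ ∀ b ∈ S, r ≤ b → b = r :=
  mem_filter

lemma le_card_of_forall_lt_mem (h : ∀ b < a, b ∈ S) : a.1 ≤ #S ∧ a.2 ≤ #S := by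
  constructor
  · simpa using card_le_card_of_injOn (s := range a.1) (fun i => (i, a.2))
      (fun i hi => h _ (Prod.mk_lt_mk_of_lt_of_le (mem_range.1 hi) le_rfl))
      (fun i _ j _ hij => (Prod.mk.inj hij).1)
  · simpa using card_le_card_of_injOn (s := range a.2) (fun j => (a.1, j))
      (fun j hj => h _ (Prod.mk_lt_mk_of_le_of_lt le_rfl (mem_range.1 hj)))
      (fun i _ j _ hij => (Prod.mk.inj hij).2)

lemma mem_of_lt_of_isLowerSet_insert (hc : IsLowerSet (↑(insert c S) : Set (ℕ × ℕ)))
    (hac : a < c) : a ∈ S := by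
  have := hc hac.le (by simp)
  simp only [coe_insert, Set.mem_insert_iff, mem_coe] at this
  exact this.resolve_left hac.ne

@[simp]
lemma mem_addableCells :
    c ∈ addableCells S ↔ c ∉ S ∧ IsLowerSet (↑(insert c S) : Set (ℕ × ℕ)) := by
  classical
  simp only [addableCells, mem_filter, mem_product, mem_range, and_iff_right_iff_imp]
  intro ⟨_, hc⟩
  have := le_card_of_forall_lt_mem fun b => mem_of_lt_of_isLowerSet_insert hc
  omega

lemma IsLowerSet.erase_of_mem_removableCells (hS : IsLowerSet (↑S : Set (ℕ × ℕ)))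
    (hr : r ∈ removableCells S) : IsLowerSet (↑(S.erase r) : Set (ℕ × ℕ)) := by
  intro x y hyx hx
  simp only [coe_erase, Set.mem_sdiff, mem_coe, Set.mem_singleton_iff] at hx ⊢
  exact ⟨hS hyx hx.1, fun hyr => hx.2 ((mem_removableCells.1 hr).2 x hx.1 (hyr ▸ hyx))⟩

lemma mem_addableCells_erase (hS : IsLowerSet (↑S : Set (ℕ × ℕ)))
    (hr : r ∈ removableCells S) : r ∈ addableCells (S.erase r) := by
  rw [mem_addableCells, insert_erase (mem_removableCells.1 hr).1]
  exact ⟨notMem_erase r S, hS⟩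

lemma mem_removableCells_insert (hS : IsLowerSet (↑S : Set (ℕ × ℕ)))
    (hc : c ∈ addableCells S) : c ∈ removableCells (insert c S) := by
  refine mem_removableCells.2 ⟨mem_insert_self c S, fun b hb hcb => ?_⟩
  rcases mem_insert.1 hb with rfl | hb
  · rfl
  · exact absurd (hS hcb hb) (mem_addableCells.1 hc).1

lemma mem_addableCells_and_mem_removableCells_insert_iff
    (hS : IsLowerSet (↑S : Set (ℕ × ℕ))) :
    c ∈ addableCells S ∧ r ∈ (removableCells (insert c S)).erase c ↔
      c ∈ (addableCells (S.erase r)).erase r ∧ r ∈ removableCells S := by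
  simp only [mem_erase, mem_addableCells, mem_removableCells, mem_insert]
  constructor
  · rintro ⟨⟨hcS, hcl⟩, hrc, hr, hrmax⟩
    have hrS : r ∈ S := hr.resolve_left hrc
    have hrem : r ∈ removableCells (insert c S) :=
      mem_removableCells.2 ⟨mem_insert.2 hr, fun b hb => hrmax b (mem_insert.1 hb)⟩
    refine ⟨⟨Ne.symm hrc, fun h => hcS h.2, ?_⟩, hrS,
      fun b hb => hrmax b (Or.inr hb)⟩
    rw [← erase_insert_of_ne (Ne.symm hrc)]
    exact hcl.erase_of_mem_removableCells hrem
  · rintro ⟨⟨hcr, hcS, hcl⟩, hrS, hrmax⟩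
    have hcS' : c ∉ S := fun h => hcS ⟨hcr, h⟩
    have hrc : ¬ r ≤ c := fun h =>
      notMem_erase r S (mem_of_lt_of_isLowerSet_insert hcl (lt_of_le_of_ne h (Ne.symm hcr)))
    refine ⟨⟨hcS', ?_⟩, Ne.symm hcr, Or.inr hrS, ?_⟩
    · have : (↑(insert c S) : Set (ℕ × ℕ)) = ↑(insert c (S.erase r)) ∪ ↑S := by
        ext; simp only [coe_insert, coe_erase, Set.mem_insert_iff, Set.mem_union, mem_coe,
          Set.mem_sdiff, Set.mem_singleton_iff]; tauto
      rw [this]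
      exact hcl.union hS
    · rintro b (rfl | hb) hrb
      · exact absurd hrb hrc
      · exact hrmax b hb hrb

theorem sum_addableCells_removableCells_comm {M : Type*} [AddCommMonoid M]
    (hS : IsLowerSet (↑S : Set (ℕ × ℕ))) (g : ℕ × ℕ → ℕ × ℕ → M) :
    ∑ c ∈ addableCells S, ∑ r ∈ (removableCells (insert c S)).erase c, g c r =
      ∑ r ∈ removableCells S, ∑ c ∈ (addableCells (S.erase r)).erase r, g c r :=
  sum_comm' fun _ _ => mem_addableCells_and_mem_removableCells_insert_iff hS

lemma IsLowerSet.insert_of_forall_lt (hS : IsLowerSet (↑S : Set (ℕ × ℕ)))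
    (hc : ∀ b < c, b ∈ S) :
    IsLowerSet (↑(insert c S) : Set (ℕ × ℕ)) := by
  intro x y hyx hx
  simp only [coe_insert, Set.mem_insert_iff, mem_coe] at hx ⊢
  rcases hx with rfl | hx
  · exact hyx.eq_or_lt.imp id (hc y)
  · exact Or.inr (hS hyx hx)

lemma mem_addableCells_iff_forall_lt (hS : IsLowerSet (↑S : Set (ℕ × ℕ))) :
    c ∈ addableCells S ↔ c ∉ S ∧ ∀ b < c, b ∈ S := by
  rw [mem_addableCells]
  exact and_congr_right fun _ =>
    ⟨fun h _ => mem_of_lt_of_isLowerSet_insert h, hS.insert_of_forall_lt⟩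

end Corners

section Branching

variable {S : Finset (ℕ × ℕ)} {c r : ℕ × ℕ}

def IsStandardFilling (S : Finset (ℕ × ℕ)) (T : S → Fin #S) : Prop :=
  Function.Injective T ∧ ∀ a b : S, (a : ℕ × ℕ) ≤ b → a ≠ b → T a < T b

open Classical in
lemma dimCells_eq_card_isStandardFilling :
    dimCells S = #{T | IsStandardFilling S T} := by
  unfold dimCells IsStandardFilling
  congr! 3 with T
  · rw [Fintype.bijective_iff_injective_and_card]
    simp
  · simp only [Prod.le_def, and_imp]

def IsTopAt (r : ℕ × ℕ) (T : S → Fin #S) : Prop :=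
  ∃ h : r ∈ S, (T ⟨r, h⟩ : ℕ) = #S - 1

lemma IsTopAt.eq {T : S → Fin #S} (hT : Function.Injective T) {r r' : ℕ × ℕ}
    (h : IsTopAt r T) (h' : IsTopAt r' T) : r = r' := by
  obtain ⟨hr, hTr⟩ := h
  obtain ⟨hr', hTr'⟩ := h'
  exact congrArg Subtype.val (hT (Fin.ext (hTr.trans hTr'.symm)))

lemma IsStandardFilling.exists_isTopAt {T : S → Fin #S} (hT : IsStandardFilling S T)
    (hS : S.Nonempty) : ∃ r ∈ removableCells S, IsTopAt r T := by
  have hsurj : Function.Surjective T :=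
    ((Fintype.bijective_iff_injective_and_card T).2 ⟨hT.1, by simp⟩).2
  obtain ⟨⟨r, hr⟩, hTr⟩ := hsurj ⟨#S - 1, by have := hS.card_pos; omega⟩
  refine ⟨r, mem_removableCells.2 ⟨hr, fun b hb hrb => ?_⟩, hr, by rw [hTr]⟩
  by_contra hbr
  have := hT.2 ⟨r, hr⟩ ⟨b, hb⟩ hrb (fun h => hbr (congrArg Subtype.val h).symm)
  have := (T ⟨b, hb⟩).2
  rw [hTr] at *
  simp only [Fin.lt_def] at *
  omega

-- The `min` only keeps the values in range; on a filling whose top entry sits at `r` it is the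
-- plain restriction (`restrictFilling_val`).
noncomputable def restrictFilling (r : ℕ × ℕ) (T : S → Fin #S) :
    S.erase r → Fin #(S.erase r) :=
  fun b => ⟨min (T ⟨b, mem_of_mem_erase b.2⟩) (#(S.erase r) - 1),
    by have := card_pos.2 ⟨b.1, b.2⟩; omega⟩

def extendFilling (hr : r ∈ S) (T : S.erase r → Fin #(S.erase r)) : S → Fin #S :=
  fun b => if hb : b.1 = r then ⟨#S - 1, by have := card_pos.2 ⟨r, hr⟩; omega⟩
    else (T ⟨b, mem_erase.2 ⟨hb, b.2⟩⟩).castLT (by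
      have := (T ⟨b, mem_erase.2 ⟨hb, b.2⟩⟩).2
      have := card_erase_lt_of_mem hr
      omega)

lemma restrictFilling_val {T : S → Fin #S} (hT : Function.Injective T) (hr : IsTopAt r T)
    (b : S.erase r) : (restrictFilling r T b : ℕ) = T ⟨b, mem_of_mem_erase b.2⟩ := by
  obtain ⟨hrS, hTr⟩ := hr
  have hne : T ⟨b, mem_of_mem_erase b.2⟩ ≠ T ⟨r, hrS⟩ :=
    hT.ne fun h => (mem_erase.1 b.2).1 (congrArg Subtype.val h)
  have := (T ⟨b, mem_of_mem_erase b.2⟩).2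
  rw [Ne, Fin.ext_iff, hTr] at hne
  simp only [restrictFilling, card_erase_of_mem hrS]
  omega

lemma extendFilling_val_self (hr : r ∈ S) (T : S.erase r → Fin #(S.erase r)) :
    (extendFilling hr T ⟨r, hr⟩ : ℕ) = #S - 1 := by
  simp [extendFilling]

lemma extendFilling_val_of_ne (hr : r ∈ S) (T : S.erase r → Fin #(S.erase r)) {b : S}
    (hb : b.1 ≠ r) : (extendFilling hr T b : ℕ) = T ⟨b, mem_erase.2 ⟨hb, b.2⟩⟩ := by
  simp [extendFilling, hb]

lemma isTopAt_extendFilling (hr : r ∈ S) (T : S.erase r → Fin #(S.erase r)) :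
    IsTopAt r (extendFilling hr T) :=
  ⟨hr, extendFilling_val_self hr T⟩

lemma IsStandardFilling.restrictFilling {T : S → Fin #S} (hT : IsStandardFilling S T)
    (htop : IsTopAt r T) : IsStandardFilling (S.erase r) (restrictFilling r T) := by
  simp only [IsStandardFilling, Function.Injective, Fin.ext_iff, Fin.lt_def,
    restrictFilling_val hT.1 htop]
  refine ⟨fun a b hab => ?_, fun a b hab hne => hT.2 _ _ hab ?_⟩
  · exact Subtype.ext (Subtype.mk_eq_mk.1 (hT.1 (Fin.ext hab)))
  · exact fun h => hne (Subtype.ext (Subtype.mk_eq_mk.1 h))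

lemma IsStandardFilling.extendFilling (hr : r ∈ removableCells S)
    {T : S.erase r → Fin #(S.erase r)} (hT : IsStandardFilling (S.erase r) T) :
    IsStandardFilling S (extendFilling (mem_removableCells.1 hr).1 T) := by
  obtain ⟨hrS, hrmax⟩ := mem_removableCells.1 hr
  have hval (b : ℕ × ℕ) (hbS : b ∈ S) (hb : b ≠ r) :
      (_root_.extendFilling hrS T ⟨b, hbS⟩ : ℕ) < #S - 1 := by
    rw [extendFilling_val_of_ne hrS T (b := ⟨b, hbS⟩) hb, ← card_erase_of_mem hrS]
    exact Fin.is_lt _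
  refine ⟨fun ⟨a, haS⟩ ⟨b, hbS⟩ hab => ?_, fun ⟨a, haS⟩ ⟨b, hbS⟩ hab hne => ?_⟩
  · rw [Fin.ext_iff] at hab
    by_cases ha : a = r <;> by_cases hb : b = r
    · simp [ha, hb]
    · subst ha; have := hval b hbS hb; rw [extendFilling_val_self] at hab; omega
    · subst hb; have := hval a haS ha; rw [extendFilling_val_self] at hab; omega
    · rw [extendFilling_val_of_ne hrS T ha, extendFilling_val_of_ne hrS T hb] at hab
      simpa using hT.1 (Fin.ext hab)
  · have hab' : a ≠ b := fun h => hne (Subtype.ext h)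
    rw [Fin.lt_def]
    by_cases hb : b = r
    · subst hb
      rw [extendFilling_val_self]
      exact hval a haS hab'
    · have ha : a ≠ r := fun ha => hb (ha ▸ hrmax b hbS (ha ▸ hab))
      rw [extendFilling_val_of_ne hrS T ha, extendFilling_val_of_ne hrS T hb]
      exact hT.2 _ _ hab fun h => hab' (Subtype.mk_eq_mk.1 h)

lemma extendFilling_restrictFilling (hr : r ∈ S) {T : S → Fin #S}
    (hT : Function.Injective T) (htop : IsTopAt r T) :
    extendFilling hr (restrictFilling r T) = T := by
  funext ⟨b, hbS⟩
  rw [Fin.ext_iff]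
  by_cases hb : b = r
  · subst hb
    rw [extendFilling_val_self, htop.2]
  · rw [extendFilling_val_of_ne hr _ hb, restrictFilling_val hT htop]

lemma restrictFilling_extendFilling (hr : r ∈ S) (T : S.erase r → Fin #(S.erase r)) :
    restrictFilling r (extendFilling hr T) = T := by
  funext b
  have := (T b).2
  rw [Fin.ext_iff]
  simp only [restrictFilling, Subtype.coe_eta,
    extendFilling_val_of_ne hr T (b := ⟨b, mem_of_mem_erase b.2⟩) (mem_erase.1 b.2).1]
  omega

open Classical in
lemma card_isStandardFilling_isTopAt (hr : r ∈ removableCells S) :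
    #{T | IsStandardFilling S T ∧ IsTopAt r T} = dimCells (S.erase r) := by
  have hrS := (mem_removableCells.1 hr).1
  rw [dimCells_eq_card_isStandardFilling]
  refine card_nbij' (restrictFilling r) (extendFilling hrS) ?_ ?_ ?_ ?_ <;>
    intro T hT <;> simp only [coe_filter, mem_univ, true_and, Set.mem_ofPred_eq] at hT ⊢
  · exact hT.1.restrictFilling hT.2
  · exact ⟨hT.extendFilling hr, isTopAt_extendFilling hrS T⟩
  · exact extendFilling_restrictFilling hrS hT.1.1 hT.2
  · exact restrictFilling_extendFilling hrS T

theorem dimCells_eq_sum_removableCells (hS : S.Nonempty) :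
    dimCells S = ∑ r ∈ removableCells S, dimCells (S.erase r) := by
  classical
  have hfib : ({T | IsStandardFilling S T} : Finset (S → Fin #S)) =
      (removableCells S).biUnion fun r => {T | IsStandardFilling S T ∧ IsTopAt r T} := by
    ext T
    simp only [mem_filter, mem_univ, true_and, mem_biUnion]
    refine ⟨fun hT => ?_, fun ⟨_, _, hT, _⟩ => hT⟩
    obtain ⟨r, hr, htop⟩ := hT.exists_isTopAt hS
    exact ⟨r, hr, hT, htop⟩
  rw [dimCells_eq_card_isStandardFilling, hfib, card_biUnion]
  · exact sum_congr rfl fun r hr => card_isStandardFilling_isTopAt hr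
  · intro r _ r' _ hrr'
    exact disjoint_filter.2 fun T _ h h' => hrr' (h.2.eq h.1.1 h'.2)

lemma dimCells_insert_eq_add_sum (hS : IsLowerSet (↑S : Set (ℕ × ℕ)))
    (hc : c ∈ addableCells S) :
    dimCells (insert c S) = dimCells S +
      ∑ r ∈ (removableCells (insert c S)).erase c, dimCells (insert c (S.erase r)) := by
  rw [dimCells_eq_sum_removableCells (insert_nonempty c S),
    ← add_sum_erase _ _ (mem_removableCells_insert hS hc),
    erase_insert (mem_addableCells.1 hc).1]
  congr 1
  refine sum_congr rfl fun r hr => ?_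
  rw [erase_insert_of_ne (ne_of_mem_erase hr).symm]

end Branching

section Telescope

variable {G : Type*} [AddCommGroup G]

theorem sum_range_filter_sub_sum_range_filter_of_antitone {l : ℕ → ℕ} (hl : Antitone l)
    {N : ℕ} (hN : l N = 0) (f : ℤ → G) :
    ∑ i ∈ range (N + 1) with (i = 0 ∨ l i < l (i - 1)), f ((l i : ℤ) - i)
        - ∑ i ∈ range N with l (i + 1) < l i, f ((l i : ℤ) - i - 1) =
      f 0 + ∑ i ∈ range N, ∑ j ∈ range (l i),
        (f ((j : ℤ) - i + 1) + f ((j : ℤ) - i - 1) - 2 • f ((j : ℤ) - i)) := by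
  set a : ℕ → G := fun i => f ((l i : ℤ) - i)
  set b : ℕ → G := fun i => f ((l i : ℤ) - i - 1)
  -- A row `i + 1` that is not addable has `l (i + 1) = l i`, so its term `a (i + 1)` is the
  -- term `b i` of the non-removable row `i`: both filters may be dropped.
  have hab (i : ℕ) (h : ¬ l (i + 1) < l i) : a (i + 1) = b i := by
    simp only [a, b, le_antisymm (hl i.le_succ) (not_lt.1 h)]
    congr 1; push_cast; ring
  have hrow (i : ℕ) : ∑ j ∈ range (l i),
      (f ((j : ℤ) - i + 1) + f ((j : ℤ) - i - 1) - 2 • f ((j : ℤ) - i)) =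
        (a i - b i) - (f (-(i : ℤ)) - f (-((i + 1 : ℕ) : ℤ))) := by
    have := sum_range_sub (fun j : ℕ => f ((j : ℤ) - i) - f ((j : ℤ) - i - 1)) (l i)
    simp only [a, b]
    convert this using 2 with j
    · push_cast
      rw [show (j : ℤ) + 1 - i = j - i + 1 by ring, add_sub_cancel_right, two_nsmul]
      abel
    · push_cast; ring_nf
  have hcol : ∑ i ∈ range N, (f (-(i : ℤ)) - f (-((i + 1 : ℕ) : ℤ))) = f 0 - a N := by
    have := sum_range_sub (fun i : ℕ => - f (-(i : ℤ))) N
    simp only [neg_sub_neg, Nat.cast_zero, neg_zero] at this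
    rw [this]
    simp [a, hN]
  calc _ = ∑ i ∈ range N, (a (i + 1) - b i) + a 0 := by
        rw [sum_filter, sum_filter, sum_range_succ', add_sub_right_comm, ← sum_sub_distrib]
        simp only [Nat.add_one_ne_zero, false_or, Nat.add_sub_cancel, true_or, if_true]
        congr 1
        refine sum_congr rfl fun i _ => ?_
        split_ifs with h
        · rfl
        · simp only [← hab i h, a, sub_self]
    _ = ∑ i ∈ range N, (a i - b i) + a N := by
        have h1 := sum_range_succ' a N
        have h2 := sum_range_succ a N
        rw [sum_sub_distrib, sum_sub_distrib]
        linear_combination (norm := abel) h2 - h1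
    _ = _ := by
        rw [sum_congr rfl fun i _ => hrow i, sum_sub_distrib (f := fun i => a i - b i), hcol]
        abel

end Telescope

namespace YoungDiagram

variable (μ : YoungDiagram)

lemma rowLen_eq_zero_iff {i : ℕ} : μ.rowLen i = 0 ↔ μ.colLen 0 ≤ i := by
  rw [← not_lt, ← mem_iff_lt_colLen, mem_iff_lt_rowLen]
  omega

lemma sum_cells_eq_sum_rows {M : Type*} [AddCommMonoid M] (g : ℕ × ℕ → M) :
    ∑ c ∈ μ.cells, g c =
      ∑ i ∈ range (μ.colLen 0), ∑ j ∈ range (μ.rowLen i), g (i, j) := by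
  rw [← sum_fiberwise_of_maps_to (g := Prod.fst) (t := range (μ.colLen 0))]
  · refine sum_congr rfl fun i _ => ?_
    change ∑ c ∈ μ.row i, g c = _
    rw [row_eq_prod, sum_product, sum_singleton]
  · intro c hc
    rw [mem_range, ← mem_iff_lt_colLen]
    exact μ.up_left_mem le_rfl (Nat.zero_le _) hc

lemma card_cells_eq_sum_rowLens : #μ.cells = μ.rowLens.sum := by
  rw [card_eq_sum_ones, sum_cells_eq_sum_rows]
  simp only [sum_const, card_range, smul_eq_mul, mul_one, rowLens]
  rfl

lemma getD_rowLens (i : ℕ) : μ.rowLens.getD i 0 = μ.rowLen i := by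
  by_cases hi : i < μ.colLen 0
  · rw [List.getD_eq_getElem _ _ (by simpa using hi), get_rowLens]
  · rw [List.getD_eq_default _ _ (by simpa using hi), eq_comm, rowLen_eq_zero_iff]
    omega

lemma lt_card_cells_of_mem {i j : ℕ} (h : (i, j) ∈ μ) : i < #μ.cells ∧ j < #μ.cells :=
  ⟨(mem_iff_lt_colLen.1 h).trans_le <|
      μ.colLen_eq_card.trans_le (card_le_card (filter_subset _ _)),
    (mem_iff_lt_rowLen.1 h).trans_le <|
      μ.rowLen_eq_card.trans_le (card_le_card (filter_subset _ _))⟩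

lemma mk_mem_addableCells_cells {i j : ℕ} :
    (i, j) ∈ addableCells μ.cells ↔
      j = μ.rowLen i ∧ (i = 0 ∨ μ.rowLen i < μ.rowLen (i - 1)) := by
  rw [mem_addableCells_iff_forall_lt μ.isLowerSet, mem_cells, mem_iff_lt_rowLen, not_lt]
  constructor
  · rintro ⟨hj, hlt⟩
    have hrow : ¬ μ.rowLen i < j := fun h =>
      lt_irrefl (μ.rowLen i)
        (mem_iff_lt_rowLen.1 (hlt (i, μ.rowLen i) (Prod.mk_lt_mk_of_le_of_lt le_rfl h)))
    refine ⟨by omega, or_iff_not_imp_left.2 fun hi => ?_⟩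
    have := mem_iff_lt_rowLen.1 (hlt (i - 1, j) (Prod.mk_lt_mk_of_lt_of_le (by omega) le_rfl))
    omega
  · rintro ⟨rfl, hi⟩
    refine ⟨le_rfl, fun ⟨i', j'⟩ hlt => mem_iff_lt_rowLen.2 ?_⟩
    rcases Prod.lt_iff.1 hlt with ⟨hi', hj'⟩ | ⟨hi', hj'⟩
    · have hi0 : i ≠ 0 := by rintro rfl; exact Nat.not_lt_zero _ hi'
      have := μ.rowLen_anti i' (i - 1) (by simp only at hi'; omega)
      simp only at hj'
      omega
    · exact hj'.trans_le (μ.rowLen_anti i' i hi')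

lemma mk_mem_removableCells_cells {i j : ℕ} :
    (i, j) ∈ removableCells μ.cells ↔
      j + 1 = μ.rowLen i ∧ μ.rowLen (i + 1) < μ.rowLen i := by
  simp only [mem_removableCells, Prod.forall, mem_cells, mem_iff_lt_rowLen, Prod.mk_le_mk,
    Prod.mk.injEq]
  constructor
  · rintro ⟨hj, hmax⟩
    have h1 : ¬ j + 1 < μ.rowLen i := fun h => by
      simpa using (hmax i (j + 1) h ⟨le_rfl, j.le_succ⟩).2
    have h2 : ¬ j < μ.rowLen (i + 1) := fun h => by
      simpa using (hmax (i + 1) j h ⟨i.le_succ, le_rfl⟩).1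
    omega
  · rintro ⟨hj, hi⟩
    refine ⟨by omega, fun i' j' hj' ⟨hii', hjj'⟩ => ?_⟩
    rcases hii'.eq_or_lt with rfl | hlt
    · omega
    · have := μ.rowLen_anti (i + 1) i' hlt
      omega

lemma addableCells_cells : addableCells μ.cells =
    ((range (μ.colLen 0 + 1)).filter fun i => i = 0 ∨ μ.rowLen i < μ.rowLen (i - 1)).image
      fun i => (i, μ.rowLen i) := by
  ext ⟨i, j⟩
  simp only [mem_image, mem_filter, mem_range, mk_mem_addableCells_cells, Prod.mk.injEq]
  constructor
  · rintro ⟨rfl, hi⟩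
    refine ⟨i, ⟨?_, hi⟩, rfl, rfl⟩
    by_contra hN
    have := (μ.rowLen_eq_zero_iff (i := i - 1)).2 (by omega)
    omega
  · rintro ⟨i, ⟨-, hi⟩, rfl, rfl⟩
    exact ⟨rfl, hi⟩

lemma removableCells_cells : removableCells μ.cells =
    ((range (μ.colLen 0)).filter fun i => μ.rowLen (i + 1) < μ.rowLen i).image
      fun i => (i, μ.rowLen i - 1) := by
  ext ⟨i, j⟩
  simp only [mem_image, mem_filter, mem_range, mk_mem_removableCells_cells, Prod.mk.injEq]
  constructor
  · rintro ⟨hj, hi⟩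
    refine ⟨i, ⟨?_, hi⟩, rfl, by omega⟩
    by_contra hN
    have := (μ.rowLen_eq_zero_iff (i := i)).2 (by omega)
    omega
  · rintro ⟨i, ⟨-, hi⟩, rfl, rfl⟩
    exact ⟨by omega, hi⟩

theorem sum_addableCells_sub_sum_removableCells {G : Type*} [AddCommGroup G] (f : ℤ → G) :
    ∑ c ∈ addableCells μ.cells, f (content c) -
        ∑ r ∈ removableCells μ.cells, f (content r) =
      f 0 + ∑ c ∈ μ.cells, (f (content c + 1) + f (content c - 1) - 2 • f (content c)) := by
  have hinj (g : ℕ → ℕ) (s : Finset ℕ) : Set.InjOn (fun i => (i, g i)) s :=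
    fun _ _ _ _ h => (Prod.mk.inj h).1
  have hrem : ∑ i ∈ range (μ.colLen 0) with μ.rowLen (i + 1) < μ.rowLen i,
        f (content (i, μ.rowLen i - 1)) =
      ∑ i ∈ range (μ.colLen 0) with μ.rowLen (i + 1) < μ.rowLen i,
        f ((μ.rowLen i : ℤ) - i - 1) := by
    refine sum_congr rfl fun i hi => ?_
    have : 1 ≤ μ.rowLen i := by simp only [mem_filter] at hi; omega
    simp only [content, Nat.cast_sub this]
    ring_nf
  rw [addableCells_cells, removableCells_cells, sum_image (hinj _ _), sum_image (hinj _ _),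
    sum_cells_eq_sum_rows, hrem]
  exact sum_range_filter_sub_sum_range_filter_of_antitone (fun a b h => μ.rowLen_anti a b h)
    (μ.rowLen_eq_zero_iff.2 le_rfl) f

end YoungDiagram

section Transition

variable {R : Type*} [CommRing R] (z z' : R) {S : Finset (ℕ × ℕ)}

lemma sum_addableCells_quadratic (hS : IsLowerSet (↑S : Set (ℕ × ℕ))) :
    ∑ c ∈ addableCells S, (z + content c) * (z' + content c) =
      ∑ r ∈ removableCells S, (z + content r) * (z' + content r) + (z * z' + 2 * #S) := by
  have h := (⟨S, hS⟩ : YoungDiagram).sum_addableCells_sub_sum_removableCells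
    fun t : ℤ => (z + t) * (z' + t)
  have hsecond (t : ℤ) : (z + ((t + 1 : ℤ) : R)) * (z' + ((t + 1 : ℤ) : R)) +
      (z + ((t - 1 : ℤ) : R)) * (z' + ((t - 1 : ℤ) : R)) - 2 • ((z + t) * (z' + t)) = 2 := by
    push_cast; rw [two_nsmul]; ring
  rw [sum_congr rfl fun c _ => hsecond (content c), sum_const, nsmul_eq_mul,
    Int.cast_zero, add_zero, add_zero, sub_eq_iff_eq_add] at h
  rw [h]
  ring

theorem sum_addableCells_mul_dimCells_insert (hS : IsLowerSet (↑S : Set (ℕ × ℕ))) :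
    ∑ c ∈ addableCells S, (z + content c) * (z' + content c) * (dimCells (insert c S) : R) =
      (#S + 1) * (z * z' + #S) * dimCells S := by
  induction S using Finset.strongInduction with
  | H S ih =>
  have hinner (r : ℕ × ℕ) (hr : r ∈ removableCells S) :
      ∑ c ∈ (addableCells (S.erase r)).erase r,
        (z + content c) * (z' + content c) * (dimCells (insert c (S.erase r)) : R) =
      #S * (z * z' + #S - 1) * dimCells (S.erase r) -
        (z + content r) * (z' + content r) * dimCells S := by
    have hrS := (mem_removableCells.1 hr).1
    have hcard : (#(S.erase r) : R) = #S - 1 := by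
      rw [eq_sub_iff_add_eq, ← Nat.cast_add_one, card_erase_add_one hrS]
    rw [sum_erase_eq_sub (mem_addableCells_erase hS hr),
      ih _ (erase_ssubset hrS) (hS.erase_of_mem_removableCells hr), insert_erase hrS, hcard]
    ring
  -- The factor `#S` makes the branching rule hold for `S = ∅` too.
  have hbranch : (#S : R) * ∑ r ∈ removableCells S, (dimCells (S.erase r) : R) =
      #S * dimCells S := by
    rcases S.eq_empty_or_nonempty with rfl | hne
    · simp
    · rw [dimCells_eq_sum_removableCells hne, Nat.cast_sum]
  calc _ = (∑ c ∈ addableCells S, (z + content c) * (z' + content c)) * dimCells S +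
        ∑ c ∈ addableCells S, ∑ r ∈ (removableCells (insert c S)).erase c,
          (z + content c) * (z' + content c) * (dimCells (insert c (S.erase r)) : R) := by
        rw [sum_mul, ← sum_add_distrib]
        refine sum_congr rfl fun c hc => ?_
        rw [dimCells_insert_eq_add_sum hS hc, Nat.cast_add, Nat.cast_sum, mul_add, mul_sum]
    _ = (∑ r ∈ removableCells S, (z + content r) * (z' + content r) + (z * z' + 2 * #S)) *
          dimCells S + ∑ r ∈ removableCells S, ∑ c ∈ (addableCells (S.erase r)).erase r,
          (z + content c) * (z' + content c) * (dimCells (insert c (S.erase r)) : R) := by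
        rw [sum_addableCells_quadratic z z' hS, sum_addableCells_removableCells_comm hS]
    _ = _ := by
        rw [sum_congr rfl hinner, sum_sub_distrib, ← mul_sum, ← sum_mul]
        linear_combination (z * z' + (#S : R) - 1) * hbranch

end Transition

namespace Nat.Partition

variable {n : ℕ} (ρ : Nat.Partition n)

def toYoungDiagram : YoungDiagram :=
  YoungDiagram.ofRowLens _ (List.sortedGE_iff_pairwise.2 (Multiset.pairwise_sort ρ.parts _))

lemma rowLens_toYoungDiagram : ρ.toYoungDiagram.rowLens = ρ.parts.sort (· ≥ ·) :=
  YoungDiagram.rowLens_ofRowLens_eq_self fun _ hx => ρ.parts_pos ((Multiset.mem_sort _).1 hx)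

lemma card_cells_toYoungDiagram : #ρ.toYoungDiagram.cells = n := by
  rw [YoungDiagram.card_cells_eq_sum_rowLens, rowLens_toYoungDiagram, ← Multiset.sum_coe,
    Multiset.sort_eq, ρ.parts_sum]

lemma cellsOf_eq_cells_toYoungDiagram : cellsOf ρ = ρ.toYoungDiagram.cells := by
  ext ⟨i, j⟩
  simp only [cellsOf, partFun, mem_filter, mem_product, mem_range, ← rowLens_toYoungDiagram,
    YoungDiagram.getD_rowLens, ← YoungDiagram.mem_iff_lt_rowLen, YoungDiagram.mem_cells]
  refine and_iff_right_of_imp fun h => ?_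
  simpa [card_cells_toYoungDiagram] using ρ.toYoungDiagram.lt_card_cells_of_mem h

lemma toYoungDiagram_injective : Function.Injective (toYoungDiagram (n := n)) := by
  intro ρ σ h
  ext1
  rw [← Multiset.sort_eq ρ.parts (· ≥ ·), ← rowLens_toYoungDiagram, h,
    rowLens_toYoungDiagram, Multiset.sort_eq]

lemma exists_toYoungDiagram_eq (μ : YoungDiagram) (hμ : #μ.cells = n) :
    ∃ ρ : Nat.Partition n, ρ.toYoungDiagram = μ := by
  refine ⟨⟨μ.rowLens, fun hx => μ.pos_of_mem_rowLens _ hx, ?_⟩, ?_⟩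
  · rw [Multiset.sum_coe, ← YoungDiagram.card_cells_eq_sum_rowLens, hμ]
  · apply YoungDiagram.equivListRowLens.injective
    ext1
    simp only [YoungDiagram.equivListRowLens_apply_coe, rowLens_toYoungDiagram,
      Multiset.coe_sort]
    exact List.mergeSort_eq_self _ (List.sortedGE_iff_pairwise.1 μ.rowLens_sorted)

end Nat.Partition

def diagramsOfCard (n : ℕ) : Finset (Finset (ℕ × ℕ)) :=
  univ.image fun ρ : Nat.Partition n => cellsOf ρ

section DiagramsOfCard

variable {n : ℕ}

lemma cellsOf_injective : Function.Injective (cellsOf : Nat.Partition n → Finset (ℕ × ℕ)) :=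
  fun ρ σ h => Nat.Partition.toYoungDiagram_injective <| YoungDiagram.ext <| by
    rwa [← ρ.cellsOf_eq_cells_toYoungDiagram, ← σ.cellsOf_eq_cells_toYoungDiagram]

lemma mem_diagramsOfCard {S : Finset (ℕ × ℕ)} :
    S ∈ diagramsOfCard n ↔ IsLowerSet (↑S : Set (ℕ × ℕ)) ∧ #S = n := by
  simp only [diagramsOfCard, mem_image, mem_univ, true_and]
  constructor
  · rintro ⟨ρ, rfl⟩
    rw [ρ.cellsOf_eq_cells_toYoungDiagram]
    exact ⟨ρ.toYoungDiagram.isLowerSet, ρ.card_cells_toYoungDiagram⟩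
  · rintro ⟨hS, rfl⟩
    obtain ⟨ρ, hρ⟩ := Nat.Partition.exists_toYoungDiagram_eq ⟨S, hS⟩ rfl
    exact ⟨ρ, by rw [ρ.cellsOf_eq_cells_toYoungDiagram, hρ]⟩

lemma sum_partition_eq_sum_diagramsOfCard {M : Type*} [AddCommMonoid M]
    (F : Finset (ℕ × ℕ) → M) :
    ∑ ρ : Nat.Partition n, F (cellsOf ρ) = ∑ S ∈ diagramsOfCard n, F S :=
  (sum_image fun _ _ _ _ h => cellsOf_injective h).symm

theorem sum_diagramsOfCard_succ_removableCells {M : Type*} [AddCommMonoid M]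
    (g : Finset (ℕ × ℕ) → ℕ × ℕ → M) :
    ∑ S ∈ diagramsOfCard (n + 1), ∑ r ∈ removableCells S, g (S.erase r) r =
      ∑ T ∈ diagramsOfCard n, ∑ c ∈ addableCells T, g T c := by
  rw [sum_sigma', sum_sigma']
  refine sum_nbij' (fun p => ⟨p.1.erase p.2, p.2⟩) (fun q => ⟨insert q.2 q.1, q.2⟩)
    ?_ ?_ ?_ ?_ fun _ _ => rfl
  · rintro ⟨S, r⟩ h
    obtain ⟨hSn, hr⟩ := mem_sigma.1 (mem_coe.1 h)
    obtain ⟨hS, hcard⟩ := mem_diagramsOfCard.1 hSn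
    refine mem_sigma.2 ⟨mem_diagramsOfCard.2 ⟨hS.erase_of_mem_removableCells hr, ?_⟩,
      mem_addableCells_erase hS hr⟩
    rw [card_erase_of_mem (mem_removableCells.1 hr).1, hcard, Nat.add_sub_cancel]
  · rintro ⟨T, c⟩ h
    obtain ⟨hTn, hc⟩ := mem_sigma.1 (mem_coe.1 h)
    obtain ⟨hT, hcard⟩ := mem_diagramsOfCard.1 hTn
    refine mem_sigma.2 ⟨mem_diagramsOfCard.2 ⟨(mem_addableCells.1 hc).2, ?_⟩,
      mem_removableCells_insert hT hc⟩
    rw [card_insert_of_notMem (mem_addableCells.1 hc).1, hcard]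
  · rintro ⟨S, r⟩ h
    simp [insert_erase (mem_removableCells.1 (mem_sigma.1 (mem_coe.1 h)).2).1]
  · rintro ⟨T, c⟩ h
    simp [erase_insert (mem_addableCells.1 (mem_sigma.1 (mem_coe.1 h)).2).1]

end DiagramsOfCard

section ZMeasure

variable {R : Type*} [CommRing R] (z z' : R)

def pochCells (x : R) (S : Finset (ℕ × ℕ)) : R := ∏ c ∈ S, (x + content c)

lemma pochPartition_eq_pochCells {n : ℕ} (x : ℂ) (ρ : Nat.Partition n) :
    pochPartition x ρ = pochCells x (cellsOf ρ) := by
  refine prod_congr rfl fun c _ => ?_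
  push_cast [content]
  ring

lemma dimCells_empty : dimCells ∅ = 1 := by decide

def zWeight (S : Finset (ℕ × ℕ)) : R := pochCells z S * pochCells z' S * (dimCells S : R) ^ 2

theorem sum_zWeight_diagramsOfCard_succ (n : ℕ) :
    ∑ S ∈ diagramsOfCard (n + 1), zWeight z z' S =
      (n + 1) * (z * z' + n) * ∑ S ∈ diagramsOfCard n, zWeight z z' S := by
  set g : Finset (ℕ × ℕ) → ℕ × ℕ → R := fun T c =>
    pochCells z T * pochCells z' T * dimCells T *
      ((z + content c) * (z' + content c) * dimCells (insert c T))
  have hexpand (S : Finset (ℕ × ℕ)) (hS : S ∈ diagramsOfCard (n + 1)) :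
      zWeight z z' S = ∑ r ∈ removableCells S, g (S.erase r) r := by
    have hne : S.Nonempty := card_pos.1 (by rw [(mem_diagramsOfCard.1 hS).2]; omega)
    rw [zWeight, sq, ← mul_assoc]
    nth_rw 2 [dimCells_eq_sum_removableCells hne]
    rw [Nat.cast_sum, mul_sum]
    refine sum_congr rfl fun r hr => ?_
    have hrS := (mem_removableCells.1 hr).1
    simp only [g, insert_erase hrS, pochCells, ← mul_prod_erase S _ hrS]
    ring
  calc _ = ∑ S ∈ diagramsOfCard (n + 1), ∑ r ∈ removableCells S, g (S.erase r) r :=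
        sum_congr rfl hexpand
    _ = ∑ T ∈ diagramsOfCard n, ∑ c ∈ addableCells T, g T c :=
        sum_diagramsOfCard_succ_removableCells g
    _ = _ := by
        rw [mul_sum]
        refine sum_congr rfl fun T hT => ?_
        obtain ⟨hT, hcard⟩ := mem_diagramsOfCard.1 hT
        simp only [g, zWeight]
        rw [← mul_sum, sum_addableCells_mul_dimCells_insert z z' hT, hcard]
        ring

theorem sum_zWeight_diagramsOfCard (n : ℕ) :
    ∑ S ∈ diagramsOfCard n, zWeight z z' S =
      (∏ i ∈ range n, (z * z' + i)) * n.factorial := by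
  induction n with
  | zero =>
    have : diagramsOfCard 0 = {∅} := by
      ext S
      simp only [mem_diagramsOfCard, card_eq_zero, mem_singleton]
      exact ⟨And.right, fun h => ⟨by simp [h, isLowerSet_empty], h⟩⟩
    simp [this, zWeight, pochCells, dimCells_empty]
  | succ n ih =>
    rw [sum_zWeight_diagramsOfCard_succ, ih, prod_range_succ, Nat.factorial_succ]
    push_cast
    ring

end ZMeasure

theorem z_measure_identity_general (n : ℕ) (z z' : ℂ) :
    ∑ ρ : Nat.Partition n, pochPartition z ρ * pochPartition z' ρ * (dimP ρ : ℂ) ^ 2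
      = (∏ i ∈ Finset.range n, (z * z' + i)) * n.factorial := by
  simp only [pochPartition_eq_pochCells, dimP]
  exact (sum_partition_eq_sum_diagramsOfCard (zWeight z z')).trans
    (sum_zWeight_diagramsOfCard z z' n)

/-- The identity `∑_{λ ⊢ n} (z)_λ (z′)_λ (dim λ)² = (zz′)_n · n!`. -/
theorem z_measure_identity (n : ℕ) (hn : 1 ≤ n) (z z' : ℂ) :
    ∑ ρ : Nat.Partition n, pochPartition z ρ * pochPartition z' ρ * (dimP ρ : ℂ) ^ 2
      = (∏ i ∈ Finset.range n, (z * z' + i)) * n.factorial :=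
  z_measure_identity_general n z z'
end
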